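/- Let V : ℕ → ℤ[T,T⁻¹] satisfy the Jones recurrence V(m+2) = (T³ − T)·V(m+1) + T⁴·V(m) for all m. Suppose V(0) ≠ 0 and the pair (V(0), V(1)) is critical, i.e. deg V(1) = 1 + deg V(0), and let C be the sum of the leading coefficients of V(0) and V(1). If C ≠ 0, then: (i) for every m ≥ 1, the pair (V(m), V(m+1)) is stable; (ii) for every m ≥ 1, deg V(m) = deg V(1) + 3·(m − 1); (iii) for every m ≥ 2, the leading coefficient of V(m) equals C. -/

import Mathlib

/-- The degree of a Laurent polynomial `f`, viewed as a finitely supported function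
`ℤ → ℤ`: the maximum of its support in `WithBot ℤ` (so `jdeg 0 = ⊥`). -/
noncomputable def jdeg (f : LaurentPolynomial ℤ) : WithBot ℤ :=
  (AddMonoidAlgebra.coeff f : ℤ →₀ ℤ).support.max

/-- The leading coefficient of a Laurent polynomial: its coefficient at `jdeg f`
(for `f ≠ 0`; by convention `jcoeff 0 = 0`). -/
noncomputable def jcoeff (f : LaurentPolynomial ℤ) : ℤ :=
  (AddMonoidAlgebra.coeff f : ℤ →₀ ℤ) (WithBot.unbotD 0 ((AddMonoidAlgebra.coeff f : ℤ →₀ ℤ).support.max))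

/-!
Write `d` for the degree of `V 0`. The coefficient of `V (m + 2)` in degree `k` is that of
`V (m + 1)` at `k - 3`, minus that of `V (m + 1)` at `k - 1`, plus that of `V m` at `k - 4`.
Hence, by induction, `V (m + 1)` vanishes above `d + 3m + 1`, and the coefficient of `V (m + 2)`
at `d + 3m + 4` is the sum of the coefficient of `V (m + 1)` at `d + 3m + 1` and that of `V m` at
`d + 3m`. The second summand is the leading coefficient of `V 0` for `m = 0` and vanishes for
`m ≥ 1`, so all these coefficients equal `C`; since `C ≠ 0`, the degree bounds are attained.
-/

namespace LaurentPolynomial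

variable {R : Type*}

section Semiring

variable [Semiring R]

theorem coeff_T_mul (n k : ℤ) (f : R[T;T⁻¹]) : (T n * f).coeff k = f.coeff (k - n) := by
  rw [T, AddMonoidAlgebra.coeff_single_mul_apply, one_mul, neg_add_eq_sub]

theorem degree_le_iff_coeff_eq_zero {f : R[T;T⁻¹]} {d : ℤ} :
    f.degree ≤ d ↔ ∀ k, d < k → f.coeff k = 0 := by
  simp only [degree, Finset.max_le_iff, Finsupp.mem_support_iff, WithBot.coe_le_coe]
  exact forall_congr' fun k => by rw [not_imp_comm, not_le]

theorem degree_eq_of_coeff_ne_zero {f : R[T;T⁻¹]} {d : ℤ} (hle : f.degree ≤ d)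
    (hd : f.coeff d ≠ 0) : f.degree = d :=
  le_antisymm hle (Finset.le_max (Finsupp.mem_support_iff.2 hd))

end Semiring

section Ring

variable [Ring R]

theorem coeff_jones (g f : R[T;T⁻¹]) (k : ℤ) :
    ((T 3 - T 1) * g + T 4 * f).coeff k = g.coeff (k - 3) - g.coeff (k - 1) + f.coeff (k - 4) := by
  rw [sub_mul, AddMonoidAlgebra.coeff_add, AddMonoidAlgebra.coeff_sub]
  simp only [Finsupp.add_apply, Finsupp.sub_apply, coeff_T_mul]

variable {g f : R[T;T⁻¹]} {e : ℤ}

theorem degree_jones_le (hg : g.degree ≤ ↑(e + 1)) (hf : f.degree ≤ e) :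
    ((T 3 - T 1) * g + T 4 * f).degree ≤ ↑(e + 4) := by
  rw [degree_le_iff_coeff_eq_zero] at hg hf ⊢
  intro k hk
  rw [coeff_jones, hg (k - 3) (by omega), hg (k - 1) (by omega), hf (k - 4) (by omega),
    sub_self, add_zero]

theorem coeff_jones_of_degree_le (hg : g.degree ≤ ↑(e + 1)) :
    ((T 3 - T 1) * g + T 4 * f).coeff (e + 4) = g.coeff (e + 1) + f.coeff e := by
  rw [coeff_jones, degree_le_iff_coeff_eq_zero.1 hg (e + 4 - 1) (by omega), sub_zero,
    show e + 4 - 3 = e + 1 by ring, show e + 4 - 4 = e by ring]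

variable {V : ℕ → R[T;T⁻¹]} {d : ℤ}

theorem degree_le_of_jones_recurrence
    (hV : ∀ m, V (m + 2) = (T 3 - T 1) * V (m + 1) + T 4 * V m)
    (h0 : (V 0).degree ≤ d) (h1 : (V 1).degree ≤ ↑(d + 1)) (m : ℕ) :
    (V (m + 1)).degree ≤ ↑(d + 3 * m + 1) := by
  suffices h : ∀ m : ℕ,
      (V m).degree ≤ ↑(d + 3 * m) ∧ (V (m + 1)).degree ≤ ↑(d + 3 * m + 1) from (h m).2
  intro m
  induction m with
  | zero => simpa using ⟨h0, h1⟩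
  | succ n ih =>
    refine ⟨ih.2.trans (WithBot.coe_le_coe.2 (by push_cast; omega)), ?_⟩
    rw [hV]
    convert degree_jones_le ih.2 ih.1 using 2
    push_cast; ring

theorem coeff_of_jones_recurrence
    (hV : ∀ m, V (m + 2) = (T 3 - T 1) * V (m + 1) + T 4 * V m)
    (h0 : (V 0).degree ≤ d) (h1 : (V 1).degree ≤ ↑(d + 1)) (m : ℕ) :
    (V (m + 2)).coeff (d + 3 * m + 4) = (V 0).coeff d + (V 1).coeff (d + 1) := by
  induction m with
  | zero => rw [hV, Nat.cast_zero, mul_zero, add_zero, coeff_jones_of_degree_le h1, add_comm]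
  | succ n ih =>
    have hg := degree_le_of_jones_recurrence hV h0 h1 (n + 1)
    have hf := degree_le_of_jones_recurrence hV h0 h1 n
    rw [hV, show d + 3 * ((n + 1 : ℕ) : ℤ) + 4 = d + 3 * n + 3 + 4 by push_cast; ring,
      coeff_jones_of_degree_le (by convert hg using 2; push_cast; ring),
      show d + 3 * (n : ℤ) + 3 + 1 = d + 3 * n + 4 by ring, ih,
      degree_le_iff_coeff_eq_zero.1 hf _ (by omega), add_zero]

end Ring

end LaurentPolynomial

theorem jdeg_eq_degree (f : LaurentPolynomial ℤ) : jdeg f = f.degree := rfl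

theorem jcoeff_eq_coeff_of_degree_eq {f : LaurentPolynomial ℤ} {d : ℤ} (h : f.degree = d) :
    jcoeff f = f.coeff d := by
  change f.coeff (f.degree.unbotD 0) = _
  rw [h, WithBot.unbotD_coe]

open LaurentPolynomial in
/-- **Proposition 3.4, Case 1** (critical case, nonvanishing coefficient sum).
If `V` satisfies the Jones recurrence, `V 0 ≠ 0`, the pair `(V 0, V 1)` is critical
(`deg V 1 = 1 + deg V 0`), and the sum `C` of the leading coefficients of `V 0` and
`V 1` is nonzero, then every pair `(V m, V (m+1))` with `m ≥ 1` is stable,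
`deg V m = deg V 1 + 3(m−1)` for `m ≥ 1`, and the leading coefficient of `V m` is `C`
for `m ≥ 2`. -/
theorem jones_critical_case_one (V : ℕ → LaurentPolynomial ℤ)
    (hV : ∀ m : ℕ, V (m + 2) = (T 3 - T 1) * V (m + 1) + T 4 * V m)
    (h0 : V 0 ≠ 0)
    (hcrit : jdeg (V 1) = 1 + jdeg (V 0))
    (C : ℤ) (hC : C = jcoeff (V 0) + jcoeff (V 1)) (hC0 : C ≠ 0) :
    (∀ m : ℕ, 1 ≤ m → 1 + jdeg (V m) < jdeg (V (m + 1))) ∧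
    (∀ m : ℕ, 1 ≤ m → jdeg (V m) = jdeg (V 1) + ((3 * ((m : ℤ) - 1) : ℤ) : WithBot ℤ)) ∧
    (∀ m : ℕ, 2 ≤ m → jcoeff (V m) = C) := by
  simp only [jdeg_eq_degree] at hcrit ⊢
  obtain ⟨d, hd0⟩ := WithBot.ne_bot_iff_exists.1 (mt degree_eq_bot_iff.1 h0)
  have hd1 : (V 1).degree = ↑(d + 1) := by rw [hcrit, ← hd0, add_comm]; rfl
  have hcoeff (m : ℕ) : (V (m + 2)).coeff (d + 3 * m + 4) = C := by
    rw [coeff_of_jones_recurrence hV hd0.symm.le hd1.le, hC,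
      jcoeff_eq_coeff_of_degree_eq hd0.symm, jcoeff_eq_coeff_of_degree_eq hd1]
  have hdeg : ∀ m : ℕ, (V (m + 1)).degree = ↑(d + 3 * m + 1)
    | 0 => by simpa using hd1
    | m + 1 => by
      refine degree_eq_of_coeff_ne_zero (degree_le_of_jones_recurrence hV hd0.symm.le hd1.le _) ?_
      convert hcoeff m ▸ hC0 using 2
      push_cast; ring
  refine ⟨?_, ?_, ?_⟩
  · rintro (_ | m) hm
    · omega
    · rw [hdeg, hdeg]
      norm_cast
      omega
  · rintro (_ | m) hm
    · omega
    · rw [hdeg, hdeg 0]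
      norm_cast
      push_cast
      ring
  · rintro (_ | _ | m) hm
    · omega
    · omega
    · rw [jcoeff_eq_coeff_of_degree_eq (hdeg (m + 1))]
      convert hcoeff m using 2
      push_cast; ring
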